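/- arXiv:2210.04146 — 4 statements merged into one kernel-verified Lean document; each statement's English description precedes it below -/
import Mathlib

section
/- For all integers T, j, t with 2 ≤ j ≤ t ≤ T, one has (t/T)^j − ((t−1)/T)^j − j·∏_{s=1}^{j−1}(t−s) / ∏_{s=1}^{j}(T+1−s) ≤ j(j−1)^2/T^2. -/
/-!
Both weights are compared with `j t^(j-1) / T^j`. By the mean value bound
`a^n - b^n ≤ n a^(n-1) (a - b)`, the càglàd increment `(t^j - (t-1)^j) / T^j` is at most this,
while the unbiased weight `j (t-1)^{(j-1)} / T^{(j)}` (descending factorials) is at least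
`j (t-j+1)^(j-1) / T^j`. The same mean value bound, applied once more, gives
`t^(j-1) - (t-j+1)^(j-1) ≤ (j-1)^2 t^(j-2) ≤ (j-1)^2 T^(j-2)`.
-/

open Finset Polynomial

theorem pow_sub_pow_le_mul_pow_mul_sub {R : Type*} [CommRing R] [LinearOrder R]
    [IsStrictOrderedRing R] {a b : R} (hb : 0 ≤ b) (hba : b ≤ a) (n : ℕ) :
    a ^ n - b ^ n ≤ n * a ^ (n - 1) * (a - b) := by
  have ha : 0 ≤ a := hb.trans hba
  rw [← geom_sum₂_mul]
  gcongr ?_ * _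
  calc ∑ i ∈ range n, a ^ i * b ^ (n - 1 - i)
      ≤ ∑ i ∈ range n, a ^ i * a ^ (n - 1 - i) := by gcongr
    _ = ∑ _i ∈ range n, a ^ (n - 1) := by
        refine sum_congr rfl fun i hi => ?_
        rw [← pow_add, Nat.add_sub_cancel' (by simp at hi; omega)]
    _ = n * a ^ (n - 1) := by simp

theorem pow_sub_pow_sub_natCast_le {R : Type*} [CommRing R] [LinearOrder R]
    [IsStrictOrderedRing R] {x : R} {m : ℕ} (hm : (m : R) ≤ x) :
    x ^ m - (x - m) ^ m ≤ m ^ 2 * x ^ (m - 1) := by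
  calc x ^ m - (x - m) ^ m ≤ m * x ^ (m - 1) * (x - (x - m)) :=
        pow_sub_pow_le_mul_pow_mul_sub (sub_nonneg.2 hm) (sub_le_self _ m.cast_nonneg) m
    _ = m ^ 2 * x ^ (m - 1) := by ring

theorem prod_Icc_add_one_sub_eq_descPochhammer_eval {R : Type*} [CommRing R] (r : R) (k : ℕ) :
    ∏ s ∈ Icc 1 k, (r + 1 - s) = (descPochhammer R k).eval r := by
  induction k with
  | zero => simp
  | succ k ih =>
    rw [prod_Icc_succ_top (by omega), ih, descPochhammer_succ_eval]
    push_cast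
    ring

theorem prod_Icc_natCast_add_one_sub {R : Type*} [CommRing R] (n k : ℕ) :
    ∏ s ∈ Icc 1 k, ((n : R) + 1 - s) = n.descFactorial k := by
  rw [prod_Icc_add_one_sub_eq_descPochhammer_eval, descPochhammer_eval_eq_descFactorial]

/-- For all integers `T, j, t` with `2 ≤ j ≤ t ≤ T`, the difference between the
increment of the càglàd probability-weighted-moment weights and the unbiased (order-statistics)
weights is bounded above by `j (j-1)² / T²`:
`(t/T)^j − ((t−1)/T)^j − j·∏_{s=1}^{j−1}(t−s) / ∏_{s=1}^{j}(T+1−s) ≤ j (j−1)² / T²`. -/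
theorem pwm_weight_difference_upper_bound (T j t : ℕ) (hj : 2 ≤ j) (hjt : j ≤ t) (htT : t ≤ T) :
    ((t : ℝ) / T) ^ j - (((t : ℝ) - 1) / T) ^ j
      - (j : ℝ) * (∏ s ∈ Finset.Icc 1 (j - 1), ((t : ℝ) - (s : ℝ)))
          / (∏ s ∈ Finset.Icc 1 j, ((T : ℝ) + 1 - (s : ℝ)))
      ≤ (j : ℝ) * ((j : ℝ) - 1) ^ 2 / (T : ℝ) ^ 2 := by
  -- with `j = m + 1` and `t = u + 1` both products become descending factorials
  obtain ⟨m, rfl⟩ : ∃ m, j = m + 1 := ⟨j - 1, by omega⟩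
  obtain ⟨u, rfl⟩ : ∃ u, t = u + 1 := ⟨t - 1, by omega⟩
  simp only [Nat.add_sub_cancel, Nat.cast_add, Nat.cast_one, add_sub_cancel_right,
    prod_Icc_natCast_add_one_sub]
  have hT : (0 : ℝ) < T := by norm_cast; omega
  have hmu : (m : ℝ) ≤ u + 1 := by norm_cast; omega
  have increment_le : (((u : ℝ) + 1) / T) ^ (m + 1) - ((u : ℝ) / T) ^ (m + 1)
      ≤ (m + 1) * ((u : ℝ) + 1) ^ m / T ^ (m + 1) := by
    rw [div_pow, div_pow, ← sub_div]
    gcongr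
    simpa using
      pow_sub_pow_le_mul_pow_mul_sub (a := (u : ℝ) + 1) u.cast_nonneg (by linarith) (m + 1)
  have le_unbiased_weight : ((m : ℝ) + 1) * (u + 1 - m) ^ m / T ^ (m + 1)
      ≤ (m + 1) * (u.descFactorial m : ℝ) / T.descFactorial (m + 1) := by
    have hpow : ((u + 1 - m : ℕ) : ℝ) ^ m ≤ u.descFactorial m := by
      exact_mod_cast u.pow_sub_le_descFactorial m
    have hdesc : (T.descFactorial (m + 1) : ℝ) ≤ T ^ (m + 1) := by
      exact_mod_cast T.descFactorial_le_pow (m + 1)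
    have hpos : (0 : ℝ) < T.descFactorial (m + 1) := by
      exact_mod_cast Nat.descFactorial_pos.2 (by omega)
    rw [Nat.cast_sub (by omega)] at hpow
    push_cast at hpow
    gcongr
  calc (((u : ℝ) + 1) / T) ^ (m + 1) - ((u : ℝ) / T) ^ (m + 1)
        - ((m : ℝ) + 1) * (u.descFactorial m : ℝ) / T.descFactorial (m + 1)
      ≤ (m + 1) * ((u + 1) ^ m - (u + 1 - m) ^ m) / T ^ (m + 1) := by
        rw [mul_sub, sub_div]
        linarith
    _ ≤ (m + 1) * (m ^ 2 * (u + 1) ^ (m - 1)) / T ^ (m + 1) := by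
        gcongr
        exact pow_sub_pow_sub_natCast_le hmu
    _ ≤ (m + 1) * (m ^ 2 * T ^ (m - 1)) / T ^ (m + 1) := by
        gcongr
        exact_mod_cast htT
    _ = (m + 1) * m ^ 2 / T ^ 2 := by
        rw [show m + 1 = m - 1 + 2 by omega, pow_add]
        field_simp
end

section
/- There exists a constant C > 0 such that for all integers T, j, t with 2 ≤ j ≤ t ≤ T and j − 1 ≤ T/2, one has (t/T)^j − ((t−1)/T)^j − j·∏_{s=1}^{j−1}(t−s) / ∏_{s=1}^{j}(T+1−s) ≥ −C·j^3/T^2. -/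
/-!
Put `x = t/T` and `y = (t-1)/T`, so `x - y = 1/T`. Comparing the two products factor by factor,
`(t - s)/(T - s) ≤ t/T`, bounds the unbiased weight by `(j/T) x^(j-1)`, while the mean value
theorem for `u ↦ u^j` bounds the increment `x^j - y^j` below by `(j/T) y^(j-1)`. Their difference
is then at least `-(j/T)(x^(j-1) - y^(j-1)) ≥ -j(j-1)/T^2`, since `u ↦ u^(j-1)` is
`(j-1)`-Lipschitz on `[0, 1]`; so `C = 1` works.
-/

open Finset

section PowSubPow

variable {R : Type*} [CommRing R] [LinearOrder R] [IsStrictOrderedRing R] {x y : R}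

theorem natCast_mul_pow_pred_mul_sub_le_pow_sub_pow (hy : 0 ≤ y) (hyx : y ≤ x) (n : ℕ) :
    n * y ^ (n - 1) * (x - y) ≤ x ^ n - y ^ n := by
  rw [← geom_sum₂_mul]
  refine mul_le_mul_of_nonneg_right ?_ (sub_nonneg.mpr hyx)
  calc (n : R) * y ^ (n - 1) = ∑ _i ∈ range n, y ^ (n - 1) := by simp
    _ ≤ ∑ i ∈ range n, x ^ i * y ^ (n - 1 - i) := by
      refine sum_le_sum fun i hi => ?_
      have hi : i ≤ n - 1 := by have := mem_range.mp hi; omega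
      calc y ^ (n - 1) = y ^ i * y ^ (n - 1 - i) := by rw [← pow_add, Nat.add_sub_cancel' hi]
        _ ≤ x ^ i * y ^ (n - 1 - i) := by gcongr

theorem pow_sub_pow_le_natCast_mul_sub (hy : 0 ≤ y) (hyx : y ≤ x) (hx : x ≤ 1) (n : ℕ) :
    x ^ n - y ^ n ≤ n * (x - y) := by
  have hmax : max |x| |y| ^ (n - 1) ≤ 1 :=
    pow_le_one₀ (by positivity) (max_le (by rwa [abs_of_nonneg (hy.trans hyx)])
      (by rw [abs_of_nonneg hy]; exact hyx.trans hx))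
  calc x ^ n - y ^ n ≤ |x ^ n - y ^ n| := le_abs_self _
    _ ≤ |x - y| * n * max |x| |y| ^ (n - 1) := abs_pow_sub_pow_le ..
    _ ≤ |x - y| * n * 1 := by gcongr
    _ = n * (x - y) := by rw [abs_of_nonneg (sub_nonneg.mpr hyx)]; ring

end PowSubPow

theorem prod_Icc_one_add_one_sub {R : Type*} [CommRing R] (b : R) (m : ℕ) :
    ∏ s ∈ Icc 1 (m + 1), (b + 1 - s) = b * ∏ s ∈ Icc 1 m, (b - s) := by
  induction m with
  | zero => simp
  | succ m ih =>
    rw [prod_Icc_succ_top (by omega), ih, prod_Icc_succ_top (by omega)]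
    push_cast
    ring

theorem prod_Icc_sub_div_prod_Icc_sub_le_pow {a b : ℝ} {m : ℕ} (hma : (m : ℝ) ≤ a)
    (hab : a ≤ b) (hmb : (m : ℝ) < b) :
    (∏ s ∈ Icc 1 m, (a - s)) / ∏ s ∈ Icc 1 m, (b - s) ≤ (a / b) ^ m := by
  have hb : 0 < b := lt_of_le_of_lt m.cast_nonneg hmb
  have hden : 0 < ∏ s ∈ Icc 1 m, (b - s) := prod_pos fun s hs => by
    have : (s : ℝ) ≤ m := by exact_mod_cast (mem_Icc.mp hs).2
    linarith
  have hpow : (a / b) ^ m = ∏ _s ∈ Icc 1 m, a / b := by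
    rw [prod_const, Nat.card_Icc, Nat.add_sub_cancel]
  rw [div_le_iff₀ hden, hpow, ← prod_mul_distrib]
  refine prod_le_prod (fun s hs => ?_) fun s hs => ?_
  · have : (s : ℝ) ≤ m := by exact_mod_cast (mem_Icc.mp hs).2
    linarith
  · rw [div_mul_eq_mul_div, le_div_iff₀ hb]
    have : (0 : ℝ) ≤ s := s.cast_nonneg
    nlinarith

/-- There exists a constant `C > 0` such that for all integers `T, j, t` with
`2 ≤ j ≤ t ≤ T` and `j − 1 ≤ T/2`, the difference between the increment of the càglàd
probability-weighted-moment weights and the unbiased (order-statistics) weights is bounded below: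
`(t/T)^j − ((t−1)/T)^j − j·∏_{s=1}^{j−1}(t−s) / ∏_{s=1}^{j}(T+1−s) ≥ −C·j³/T²`. -/
theorem pwm_weight_difference_lower_bound :
    ∃ C : ℝ, 0 < C ∧ ∀ T j t : ℕ, 2 ≤ j → j ≤ t → t ≤ T → ((j : ℝ) - 1) ≤ (T : ℝ) / 2 →
      -C * (j : ℝ) ^ 3 / (T : ℝ) ^ 2
        ≤ ((t : ℝ) / T) ^ j - (((t : ℝ) - 1) / T) ^ j
          - (j : ℝ) * (∏ s ∈ Finset.Icc 1 (j - 1), ((t : ℝ) - (s : ℝ)))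
              / (∏ s ∈ Finset.Icc 1 j, ((T : ℝ) + 1 - (s : ℝ))) := by
  refine ⟨1, one_pos, fun T j t _ hjt htT _ => ?_⟩
  obtain ⟨m, rfl⟩ : ∃ m, j = m + 1 := ⟨j - 1, by omega⟩
  rw [Nat.add_sub_cancel, prod_Icc_one_add_one_sub, mul_div_mul_comm]
  push_cast
  have hm : (0 : ℝ) ≤ m := m.cast_nonneg
  have hmt : (m : ℝ) + 1 ≤ t := by exact_mod_cast hjt
  have htT' : (t : ℝ) ≤ T := by exact_mod_cast htT
  have hT : (0 : ℝ) < T := by linarith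
  set x := (t : ℝ) / T
  set y := ((t : ℝ) - 1) / T
  have hxy : x - y = 1 / T := by simp only [x, y]; ring
  have hy : 0 ≤ y := div_nonneg (by linarith) hT.le
  have hyx : y ≤ x := by linarith [one_div_pos.mpr hT]
  have hweight := prod_Icc_sub_div_prod_Icc_sub_le_pow (m := m) (by linarith) htT' (by linarith)
  have hincr := natCast_mul_pow_pred_mul_sub_le_pow_sub_pow hy hyx (m + 1)
  have hgap := pow_sub_pow_le_natCast_mul_sub hy hyx ((div_le_one hT).mpr htT') m
  rw [hxy] at hincr hgap
  push_cast at hincr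
  calc -1 * ((m : ℝ) + 1) ^ 3 / (T : ℝ) ^ 2 ≤ -(((m : ℝ) + 1) * m / T ^ 2) := by
        rw [neg_mul, one_mul, neg_div, neg_le_neg_iff]
        gcongr
        nlinarith [mul_nonneg hm (sq_nonneg (m : ℝ))]
    _ = -(((m : ℝ) + 1) / T * (m * (1 / T))) := by ring
    _ ≤ -(((m : ℝ) + 1) / T * (x ^ m - y ^ m)) := by gcongr
    _ = ((m : ℝ) + 1) * y ^ m * (1 / T) - (m + 1) / T * x ^ m := by ring
    _ ≤ _ := sub_le_sub hincr (mul_le_mul_of_nonneg_left hweight (by positivity))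
end

section
/- Let ψ, φ : (0,1) → ℝ be differentiable with bounded, uniformly continuous derivatives ψ', φ' on (0,1), and suppose the tail condition lim_{u→0⁺} [ψ(u)φ(u) + ψ(1−u)φ(1−u)]/u = 0 holds. For G ≥ 2 set g_i = i/(G+1) for i = 1,…,G, and define S_G = (G+1)[∑_{i=2}^{G} ψ(g_i)(φ(g_i) − φ(g_{i−1})) − ∑_{i=1}^{G−1} ψ(g_i)(φ(g_{i+1}) − φ(g_i)) + ψ(g_1)φ(g_1) + ψ(g_G)φ(g_G)]. Then S_G → ∫_0^1 ψ'(u)φ'(u) du as G → ∞. -/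
open Set Filter intervalIntegral MeasureTheory
open scoped Interval

/-- Let `ψ, φ : (0,1) → ℝ` be differentiable with bounded, uniformly continuous
derivatives `ψ', φ'` on `(0,1)`, and suppose the tail condition
`lim_{u→0⁺} [ψ(u)φ(u) + ψ(1−u)φ(1−u)]/u = 0` holds. For `G ≥ 2` set `g_i = i/(G+1)` and
`S_G = (G+1)[∑_{i=2}^{G} ψ(g_i)(φ(g_i) − φ(g_{i−1})) − ∑_{i=1}^{G−1} ψ(g_i)(φ(g_{i+1}) − φ(g_i))
+ ψ(g_1)φ(g_1) + ψ(g_G)φ(g_G)]`. Then `S_G → ∫_0^1 ψ'(u)φ'(u) du` as `G → ∞`. -/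
theorem grid_quadratic_form_tendsto_fisher_integral
    (ψ φ ψ' φ' : ℝ → ℝ)
    (hψ : ∀ u ∈ Ioo (0 : ℝ) 1, HasDerivAt ψ (ψ' u) u)
    (hφ : ∀ u ∈ Ioo (0 : ℝ) 1, HasDerivAt φ (φ' u) u)
    (hψbdd : ∃ K : ℝ, ∀ u ∈ Ioo (0 : ℝ) 1, |ψ' u| ≤ K)
    (hφbdd : ∃ K : ℝ, ∀ u ∈ Ioo (0 : ℝ) 1, |φ' u| ≤ K)
    (hψuc : UniformContinuousOn ψ' (Ioo (0 : ℝ) 1))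
    (hφuc : UniformContinuousOn φ' (Ioo (0 : ℝ) 1))
    (htail : Tendsto (fun u : ℝ => (ψ u * φ u + ψ (1 - u) * φ (1 - u)) / u)
      (nhdsWithin 0 (Ioi 0)) (nhds 0)) :
    Tendsto (fun G : ℕ =>
        ((G : ℝ) + 1) *
          ((∑ i ∈ Finset.Icc 2 G,
              ψ ((i : ℝ) / ((G : ℝ) + 1)) *
                (φ ((i : ℝ) / ((G : ℝ) + 1)) - φ (((i : ℝ) - 1) / ((G : ℝ) + 1))))
            - (∑ i ∈ Finset.Icc 1 (G - 1),
              ψ ((i : ℝ) / ((G : ℝ) + 1)) *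
                (φ (((i : ℝ) + 1) / ((G : ℝ) + 1)) - φ ((i : ℝ) / ((G : ℝ) + 1))))
            + ψ (1 / ((G : ℝ) + 1)) * φ (1 / ((G : ℝ) + 1))
            + ψ ((G : ℝ) / ((G : ℝ) + 1)) * φ ((G : ℝ) / ((G : ℝ) + 1))))
      atTop (nhds (∫ u in (0 : ℝ)..1, ψ' u * φ' u)) := by
  classical
  obtain ⟨K₁, hK₁⟩ := hψbdd
  obtain ⟨K₂, hK₂⟩ := hφbdd
  have hhalf : (1/2 : ℝ) ∈ Ioo (0:ℝ) 1 := by norm_num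
  have hK₁0 : 0 ≤ K₁ := le_trans (abs_nonneg _) (hK₁ _ hhalf)
  have hK₂0 : 0 ≤ K₂ := le_trans (abs_nonneg _) (hK₂ _ hhalf)
  have hψc : ContinuousOn ψ' (Ioo (0:ℝ) 1) := hψuc.continuousOn
  have hφc : ContinuousOn φ' (Ioo (0:ℝ) 1) := hφuc.continuousOn
  set ρ : ℝ → ℝ := fun u => ψ' u * φ' u with hρdef
  have hρc : ContinuousOn ρ (Ioo (0:ℝ) 1) := hψc.mul hφc
  have hρabs : ∀ u ∈ Ioo (0:ℝ) 1, |ρ u| ≤ K₁ * K₂ := by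
    intro u hu
    rw [hρdef, abs_mul]
    exact mul_le_mul (hK₁ u hu) (hK₂ u hu) (abs_nonneg _) hK₁0
  have hρi : IntervalIntegrable ρ volume 0 1 := by
    rw [intervalIntegrable_iff_integrableOn_Ioc_of_le (by norm_num : (0:ℝ) ≤ 1)]
    have hIoo : IntegrableOn ρ (Ioo (0:ℝ) 1) volume := by
      haveI : IsFiniteMeasure (volume.restrict (Ioo (0:ℝ) 1)) :=
        ⟨by rw [Measure.restrict_apply_univ]; simp [Real.volume_Ioo]⟩
      refine ⟨hρc.aestronglyMeasurable measurableSet_Ioo, ?_⟩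
      apply HasFiniteIntegral.of_bounded (C := K₁ * K₂)
      filter_upwards [ae_restrict_mem measurableSet_Ioo] with u hu
      simpa [Real.norm_eq_abs] using hρabs u hu
    exact hIoo.congr_set_ae
      (MeasureTheory.Ioo_ae_eq_Ioc (μ := volume) (a := (0:ℝ)) (b := 1)).symm
  set J : ℝ := ∫ u in (0:ℝ)..1, ρ u with hJdef
  set A : ℕ → ℕ → ℝ := fun G k => ((k:ℝ)+1)/((G:ℝ)+1) with hAdef
  have hn : ∀ G : ℕ, (0:ℝ) < (G:ℝ)+1 := fun G => by positivity
  have hA_lt : ∀ G k : ℕ, A G k < A G (k+1) := by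
    intro G k
    simp only [hAdef]
    have := hn G
    gcongr
    push_cast; linarith
  have hA_pos : ∀ G k : ℕ, 0 < A G k := by
    intro G k; simp only [hAdef]; positivity
  have hA_lt_one : ∀ G k : ℕ, k < G → A G k < 1 := by
    intro G k hk
    simp only [hAdef]
    rw [div_lt_one (hn G)]
    have : (k:ℝ) < (G:ℝ) := Nat.cast_lt.mpr hk
    linarith
  have hA_sub : ∀ G k : ℕ, k + 1 < G → uIcc (A G k) (A G (k+1)) ⊆ Ioo (0:ℝ) 1 := by
    intro G k hk
    rw [uIcc_of_le (hA_lt G k).le]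
    intro x hx
    exact ⟨lt_of_lt_of_le (hA_pos G k) hx.1,
      lt_of_le_of_lt hx.2 (hA_lt_one G (k+1) hk)⟩
  have hA_diff : ∀ G k : ℕ, A G (k+1) - A G k = 1/((G:ℝ)+1) := by
    intro G k
    simp only [hAdef]
    have := (hn G).ne'
    push_cast
    field_simp
    ring
  have hIψ : ∀ G k : ℕ, k + 1 < G → IntervalIntegrable ψ' volume (A G k) (A G (k+1)) :=
    fun G k hk => (hψc.mono (hA_sub G k hk)).intervalIntegrable
  have hIφ : ∀ G k : ℕ, k + 1 < G → IntervalIntegrable φ' volume (A G k) (A G (k+1)) :=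
    fun G k hk => (hφc.mono (hA_sub G k hk)).intervalIntegrable
  have hIρ : ∀ G k : ℕ, k + 1 < G → IntervalIntegrable ρ volume (A G k) (A G (k+1)) :=
    fun G k hk => (hρc.mono (hA_sub G k hk)).intervalIntegrable
  have hFψ : ∀ G k : ℕ, k + 1 < G →
      ∫ u in (A G k)..(A G (k+1)), ψ' u = ψ (A G (k+1)) - ψ (A G k) :=
    fun G k hk => integral_eq_sub_of_hasDerivAt
      (fun x hx => hψ x (hA_sub G k hk hx)) (hIψ G k hk)
  have hFφ : ∀ G k : ℕ, k + 1 < G →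
      ∫ u in (A G k)..(A G (k+1)), φ' u = φ (A G (k+1)) - φ (A G k) :=
    fun G k hk => integral_eq_sub_of_hasDerivAt
      (fun x hx => hφ x (hA_sub G k hk hx)) (hIφ G k hk)
  set Main : ℕ → ℝ := fun G => ∑ k ∈ Finset.range (G-1),
      (ψ (A G (k+1)) - ψ (A G k)) * (φ (A G (k+1)) - φ (A G k)) with hMaindef
  set I : ℕ → ℝ := fun G => ∫ u in (1/((G:ℝ)+1))..((G:ℝ)/((G:ℝ)+1)), ρ u with hIdef
  set B : ℕ → ℝ := fun G =>
      (ψ (1/((G:ℝ)+1)) * φ (1/((G:ℝ)+1)) +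
        ψ (1 - 1/((G:ℝ)+1)) * φ (1 - 1/((G:ℝ)+1))) / (1/((G:ℝ)+1)) with hBdef
  have hIsum : ∀ G : ℕ, 2 ≤ G →
      I G = ∑ k ∈ Finset.range (G-1), ∫ u in (A G k)..(A G (k+1)), ρ u := by
    intro G hG
    have h1 : ∀ k < G - 1, IntervalIntegrable ρ volume (A G k) (A G (k+1)) :=
      fun k hk => hIρ G k (by omega)
    have h2 := intervalIntegral.sum_integral_adjacent_intervals (μ := volume) (a := A G) h1
    rw [h2]
    simp only [hIdef]
    have e0 : A G 0 = 1/((G:ℝ)+1) := by simp [hAdef]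
    have eG : A G (G-1) = (G:ℝ)/((G:ℝ)+1) := by
      simp only [hAdef]
      congr 1
      have : ((G - 1 : ℕ) : ℝ) = (G:ℝ) - 1 := by
        rw [Nat.cast_sub (by omega)]; norm_num
      rw [this]; ring
    rw [e0, eG]
  have hP4 : Tendsto B atTop (nhds 0) := by
    have hto : Tendsto (fun G : ℕ => 1/((G:ℝ)+1)) atTop (nhdsWithin 0 (Ioi 0)) := by
      apply tendsto_nhdsWithin_of_tendsto_nhds_of_eventually_within
      · exact tendsto_one_div_add_atTop_nhds_zero_nat
      · exact Eventually.of_forall fun G => by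
          simp only [mem_Ioi]; positivity
    exact htail.comp hto
  have hP3 : Tendsto I atTop (nhds J) := by
    have hsub : ∀ c d : ℝ, c ∈ Icc (0:ℝ) 1 → d ∈ Icc (0:ℝ) 1 →
        IntervalIntegrable ρ volume c d := by
      intro c d hc hd
      refine hρi.mono_set ?_
      rw [uIcc_of_le (by norm_num : (0:ℝ) ≤ 1)]
      exact uIcc_subset_Icc hc hd
    have hb : ∀ G : ℕ, 1 ≤ G → |I G - J| ≤ 2*(K₁*K₂) * (1/((G:ℝ)+1)) := by
      intro G hG
      set n : ℝ := (G:ℝ)+1 with hndef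
      have hn0 : (0:ℝ) < n := hn G
      have hG1 : (1:ℝ) ≤ (G:ℝ) := by exact_mod_cast hG
      have h01 : (0:ℝ) ≤ 1/n := by positivity
      have h12 : 1/n ≤ (G:ℝ)/n := by gcongr
      have h21 : (G:ℝ)/n ≤ 1 := by
        rw [div_le_one hn0]; simp [hndef]
      have hmem1 : (1/n) ∈ Icc (0:ℝ) 1 := ⟨h01, le_trans h12 h21⟩
      have hmemG : ((G:ℝ)/n) ∈ Icc (0:ℝ) 1 := ⟨le_trans h01 h12, h21⟩
      have hmem0 : (0:ℝ) ∈ Icc (0:ℝ) 1 := by norm_num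
      have hmemE : (1:ℝ) ∈ Icc (0:ℝ) 1 := by norm_num
      have e1 : (∫ u in (0:ℝ)..(1/n), ρ u) + (∫ u in (1/n)..((G:ℝ)/n), ρ u)
          = ∫ u in (0:ℝ)..((G:ℝ)/n), ρ u :=
        integral_add_adjacent_intervals (hsub _ _ hmem0 hmem1) (hsub _ _ hmem1 hmemG)
      have e2 : (∫ u in (0:ℝ)..((G:ℝ)/n), ρ u) + (∫ u in ((G:ℝ)/n)..(1:ℝ), ρ u)
          = ∫ u in (0:ℝ)..(1:ℝ), ρ u :=
        integral_add_adjacent_intervals (hsub _ _ hmem0 hmemG) (hsub _ _ hmemG hmemE)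
      have tail1 : |∫ u in (0:ℝ)..(1/n), ρ u| ≤ (K₁*K₂) * (1/n) := by
        have hb1 : ∀ x ∈ Ι (0:ℝ) (1/n), ‖ρ x‖ ≤ K₁*K₂ := by
          intro x hx
          rw [uIoc_of_le h01] at hx
          have hx1 : x ∈ Ioo (0:ℝ) 1 := ⟨hx.1, lt_of_le_of_lt hx.2 (by
            rw [div_lt_one hn0]; simp only [hndef]; linarith)⟩
          simpa [Real.norm_eq_abs] using hρabs x hx1
        calc |∫ u in (0:ℝ)..(1/n), ρ u| ≤ (K₁*K₂) * |1/n - 0| :=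
              intervalIntegral.norm_integral_le_of_norm_le_const hb1
          _ = (K₁*K₂) * (1/n) := by rw [sub_zero, abs_of_nonneg h01]
      have tail2 : |∫ u in ((G:ℝ)/n)..(1:ℝ), ρ u| ≤ (K₁*K₂) * (1/n) := by
        have hb2 : ∀ᵐ x ∂volume, x ∈ Ι ((G:ℝ)/n) (1:ℝ) → ‖ρ x‖ ≤ K₁*K₂ := by
          filter_upwards [compl_mem_ae_iff.mpr (Real.volume_singleton (a := (1:ℝ)))] with x hx1 hx
          rw [uIoc_of_le h21] at hx
          have hxne : x ≠ 1 := hx1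
          have hx0 : 0 < x := lt_of_lt_of_le (by positivity : (0:ℝ) < (G:ℝ)/n) hx.1.le
          have hxI : x ∈ Ioo (0:ℝ) 1 := ⟨hx0, lt_of_le_of_ne hx.2 hxne⟩
          simpa [Real.norm_eq_abs] using hρabs x hxI
        have h1n : 1 - (G:ℝ)/n = 1/n := by rw [hndef]; field_simp; ring
        calc |∫ u in ((G:ℝ)/n)..(1:ℝ), ρ u| ≤ (K₁*K₂) * |1 - (G:ℝ)/n| :=
              intervalIntegral.norm_integral_le_of_norm_le_const_ae hb2
          _ = (K₁*K₂) * (1/n) := by rw [h1n, abs_of_nonneg (by positivity)]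
      have hIJ : I G - J = -((∫ u in (0:ℝ)..(1/n), ρ u) + ∫ u in ((G:ℝ)/n)..(1:ℝ), ρ u) := by
        have hI : I G = ∫ u in (1/n)..((G:ℝ)/n), ρ u := by simp only [hIdef, hndef]
        rw [hI, hJdef]
        linarith
      rw [hIJ, abs_neg]
      calc |(∫ u in (0:ℝ)..(1/n), ρ u) + ∫ u in ((G:ℝ)/n)..(1:ℝ), ρ u|
          ≤ |∫ u in (0:ℝ)..(1/n), ρ u| + |∫ u in ((G:ℝ)/n)..(1:ℝ), ρ u| := abs_add_le _ _
        _ ≤ (K₁*K₂) * (1/n) + (K₁*K₂) * (1/n) := add_le_add tail1 tail2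
        _ = 2*(K₁*K₂) * (1/n) := by ring
    have hz : Tendsto (fun G : ℕ => 2*(K₁*K₂) * (1/((G:ℝ)+1))) atTop (nhds 0) := by
      have := tendsto_one_div_add_atTop_nhds_zero_nat.const_mul (2*(K₁*K₂))
      simpa using this
    have hIJ : Tendsto (fun G : ℕ => I G - J) atTop (nhds 0) := by
      apply squeeze_zero_norm' ?_ hz
      filter_upwards [eventually_ge_atTop 1] with G hG
      simpa [Real.norm_eq_abs] using hb G hG
    have := hIJ.add_const J
    simpa using this
  have hP2 : Tendsto (fun G : ℕ => ((G:ℝ)+1) * Main G - I G) atTop (nhds 0) := by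
    rw [Metric.tendsto_atTop]
    intro ε hε
    set ε' : ℝ := ε / (2*(K₁+1)) with hε'def
    have hε'pos : 0 < ε' := by rw [hε'def]; positivity
    obtain ⟨δ, hδpos, hδ⟩ := (Metric.uniformContinuousOn_iff.mp hφuc) ε' hε'pos
    obtain ⟨N₀, hN₀⟩ := exists_nat_gt (1/δ)
    refine ⟨max N₀ 2, fun G hG => ?_⟩
    have hG2 : 2 ≤ G := le_trans (le_max_right _ _) hG
    have hGN : N₀ ≤ G := le_trans (le_max_left _ _) hG
    set n : ℝ := (G:ℝ)+1 with hndef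
    have hn0 : (0:ℝ) < n := hn G
    have hδG : 1/n < δ := by
      have h1 : 1/δ < (N₀:ℝ) := hN₀
      have h2 : (N₀:ℝ) ≤ (G:ℝ) := Nat.cast_le.mpr hGN
      rw [div_lt_iff₀ hn0]
      rw [div_lt_iff₀ hδpos] at h1
      nlinarith
    have hper : ∀ k : ℕ, k < G - 1 →
        |n * ((ψ (A G (k+1)) - ψ (A G k)) * (φ (A G (k+1)) - φ (A G k)))
          - ∫ u in (A G k)..(A G (k+1)), ρ u| ≤ (K₁ * ε') * (1/n) := by
      intro k hk
      have hk1 : k + 1 < G := by omega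
      set a : ℝ := A G k with hadef
      set b : ℝ := A G (k+1) with hbdef
      have hab : a < b := hA_lt G k
      have hsubI : uIcc a b ⊆ Ioo (0:ℝ) 1 := hA_sub G k hk1
      have hdiff : b - a = 1/n := hA_diff G k
      have hIψ' := hIψ G k hk1
      have hIφ' := hIφ G k hk1
      have hIρ' := hIρ G k hk1
      set C : ℝ := n * ∫ u in a..b, φ' u with hCdef
      have hIoc_sub : Ι a b ⊆ Ioo (0:ℝ) 1 := by
        rw [uIoc_of_le hab.le]
        exact fun x hx => hsubI (by rw [uIcc_of_le hab.le]; exact ⟨hx.1.le, hx.2⟩)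
      have hinner : ∀ u ∈ Ι a b, |C - φ' u| ≤ ε' := by
        intro u hu
        have huI : u ∈ Ioo (0:ℝ) 1 := hIoc_sub hu
        have hu' : u ∈ Ioc a b := by rwa [uIoc_of_le hab.le] at hu
        have hEq : ∫ v in a..b, (φ' v - φ' u) = (∫ v in a..b, φ' v) - (b-a) * φ' u := by
          rw [intervalIntegral.integral_sub hIφ' (intervalIntegrable_const),
            intervalIntegral.integral_const, smul_eq_mul]
        have hbnd : ∀ v ∈ Ι a b, ‖φ' v - φ' u‖ ≤ ε' := by
          intro v hv
          have hvI : v ∈ Ioo (0:ℝ) 1 := hIoc_sub hv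
          have hv' : v ∈ Ioc a b := by rwa [uIoc_of_le hab.le] at hv
          have hdist : dist v u < δ := by
            rw [Real.dist_eq]
            have hop1 : v - u ≤ b - a := by
              have := hv'.2; have := hu'.1; linarith
            have hop2 : u - v ≤ b - a := by
              have := hu'.2; have := hv'.1; linarith
            have habs : |v - u| ≤ b - a := abs_sub_le_iff.mpr ⟨hop1, hop2⟩
            calc |v - u| ≤ b - a := habs
              _ = 1/n := hdiff
              _ < δ := hδG
          exact le_of_lt (hδ v hvI u huI hdist)
        have hni := intervalIntegral.norm_integral_le_of_norm_le_const hbnd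
        rw [Real.norm_eq_abs] at hni
        have habs : |b - a| = 1/n := by rw [abs_of_pos (by linarith), hdiff]
        rw [habs] at hni
        have hCeq : C - φ' u = n * ∫ v in a..b, (φ' v - φ' u) := by
          rw [hEq, hCdef, mul_sub, hdiff]
          field_simp
        rw [hCeq, abs_mul, abs_of_pos hn0]
        calc n * |∫ v in a..b, (φ' v - φ' u)| ≤ n * (ε' * (1/n)) :=
              mul_le_mul_of_nonneg_left hni hn0.le
          _ = ε' := by field_simp
      have houter : n * ((ψ b - ψ a) * (φ b - φ a)) - (∫ u in a..b, ρ u)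
          = ∫ u in a..b, ψ' u * (C - φ' u) := by
        have hint1 : IntervalIntegrable (fun u => ψ' u * C) volume a b := hIψ'.mul_const C
        have hcongr : ∫ u in a..b, ψ' u * (C - φ' u)
            = ∫ u in a..b, (ψ' u * C - ρ u) := by
          apply intervalIntegral.integral_congr
          intro x _
          simp only [hρdef]; ring
        rw [hcongr, intervalIntegral.integral_sub hint1 hIρ',
          intervalIntegral.integral_mul_const, ← hFψ G k hk1, ← hFφ G k hk1]
        rw [hCdef]; ring
      rw [houter]
      have hb3 : ∀ u ∈ Ι a b, ‖ψ' u * (C - φ' u)‖ ≤ K₁ * ε' := by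
        intro u hu
        have huI : u ∈ Ioo (0:ℝ) 1 := hIoc_sub hu
        rw [Real.norm_eq_abs, abs_mul]
        exact mul_le_mul (hK₁ u huI) (hinner u hu) (abs_nonneg _) hK₁0
      have hni := intervalIntegral.norm_integral_le_of_norm_le_const hb3
      rw [Real.norm_eq_abs] at hni
      have habs : |b - a| = 1/n := by rw [abs_of_pos (by linarith), hdiff]
      rwa [habs] at hni
    have hsplit : ((G:ℝ)+1) * Main G - I G
        = ∑ k ∈ Finset.range (G-1),
            (n * ((ψ (A G (k+1)) - ψ (A G k)) * (φ (A G (k+1)) - φ (A G k)))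
              - ∫ u in (A G k)..(A G (k+1)), ρ u) := by
      rw [Finset.sum_sub_distrib, ← Finset.mul_sum, hIsum G hG2, hMaindef]
    rw [Real.dist_eq, sub_zero, hsplit]
    calc |∑ k ∈ Finset.range (G-1),
            (n * ((ψ (A G (k+1)) - ψ (A G k)) * (φ (A G (k+1)) - φ (A G k)))
              - ∫ u in (A G k)..(A G (k+1)), ρ u)|
        ≤ ∑ k ∈ Finset.range (G-1),
            |n * ((ψ (A G (k+1)) - ψ (A G k)) * (φ (A G (k+1)) - φ (A G k)))
              - ∫ u in (A G k)..(A G (k+1)), ρ u| := Finset.abs_sum_le_sum_abs _ _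
      _ ≤ ∑ k ∈ Finset.range (G-1), (K₁ * ε') * (1/n) := by
          apply Finset.sum_le_sum
          intro k hk
          exact hper k (Finset.mem_range.mp hk)
      _ = ((G-1 : ℕ) : ℝ) * ((K₁ * ε') * (1/n)) := by
          rw [Finset.sum_const, Finset.card_range, nsmul_eq_mul]
      _ ≤ n * ((K₁ * ε') * (1/n)) := by
          apply mul_le_mul_of_nonneg_right ?_ (by positivity)
          have : ((G-1 : ℕ) : ℝ) ≤ (G:ℝ) := by
            exact_mod_cast Nat.cast_le.mpr (by omega : G - 1 ≤ G)
          simp only [hndef]; linarith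
      _ = K₁ * ε' := by field_simp
      _ < ε := by
          rw [hε'def]
          have hlt : K₁ / (2*(K₁+1)) < 1 := by
            rw [div_lt_one (by positivity)]; linarith
          calc K₁ * (ε / (2*(K₁+1))) = (K₁ / (2*(K₁+1))) * ε := by ring
            _ < 1 * ε := by
                apply mul_lt_mul_of_pos_right hlt hε
            _ = ε := one_mul ε
  have hP1 : ∀ G : ℕ, 2 ≤ G →
      ((G : ℝ) + 1) *
          ((∑ i ∈ Finset.Icc 2 G,
              ψ ((i : ℝ) / ((G : ℝ) + 1)) *
                (φ ((i : ℝ) / ((G : ℝ) + 1)) - φ (((i : ℝ) - 1) / ((G : ℝ) + 1))))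
            - (∑ i ∈ Finset.Icc 1 (G - 1),
              ψ ((i : ℝ) / ((G : ℝ) + 1)) *
                (φ (((i : ℝ) + 1) / ((G : ℝ) + 1)) - φ ((i : ℝ) / ((G : ℝ) + 1))))
            + ψ (1 / ((G : ℝ) + 1)) * φ (1 / ((G : ℝ) + 1))
            + ψ ((G : ℝ) / ((G : ℝ) + 1)) * φ ((G : ℝ) / ((G : ℝ) + 1)))
        = ((G:ℝ)+1) * Main G + B G := by
    intro G hG
    have hn0 : (0:ℝ) < (G:ℝ)+1 := hn G
    have hB : B G = ((G:ℝ)+1) * (ψ (1/((G:ℝ)+1)) * φ (1/((G:ℝ)+1))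
        + ψ ((G:ℝ)/((G:ℝ)+1)) * φ ((G:ℝ)/((G:ℝ)+1))) := by
      simp only [hBdef]
      have h1 : 1 - 1/((G:ℝ)+1) = (G:ℝ)/((G:ℝ)+1) := by field_simp; ring
      rw [h1, div_div_eq_mul_div, div_one]
      ring
    have hS1 : (∑ i ∈ Finset.Icc 2 G,
        ψ ((i : ℝ) / ((G:ℝ)+1)) * (φ ((i : ℝ) / ((G:ℝ)+1)) - φ (((i : ℝ) - 1) / ((G:ℝ)+1))))
        = ∑ k ∈ Finset.range (G-1),
            ψ (A G (k+1)) * (φ (A G (k+1)) - φ (A G k)) := by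
      rw [← Finset.Ico_add_one_right_eq_Icc, Finset.sum_Ico_eq_sum_range]
      apply Finset.sum_congr (by congr 1)
      intro k _
      have e1 : ((2 + k : ℕ) : ℝ) = (k:ℝ) + 2 := by push_cast; ring
      have e2 : A G (k+1) = ((k:ℝ)+2)/((G:ℝ)+1) := by
        simp only [hAdef]; push_cast; ring_nf
      have e3 : A G k = ((k:ℝ)+1)/((G:ℝ)+1) := by simp only [hAdef]
      rw [e1, e2, e3,
        show ((k:ℝ)+2-1)/((G:ℝ)+1) = ((k:ℝ)+1)/((G:ℝ)+1) from by ring]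
    have hS2 : (∑ i ∈ Finset.Icc 1 (G-1),
        ψ ((i : ℝ) / ((G:ℝ)+1)) * (φ (((i : ℝ)+1) / ((G:ℝ)+1)) - φ ((i : ℝ) / ((G:ℝ)+1))))
        = ∑ k ∈ Finset.range (G-1),
            ψ (A G k) * (φ (A G (k+1)) - φ (A G k)) := by
      have hIcc : Finset.Icc 1 (G-1) = Finset.Ico 1 G := by
        rw [← Finset.Ico_add_one_right_eq_Icc]; congr 1; omega
      rw [hIcc, Finset.sum_Ico_eq_sum_range]
      apply Finset.sum_congr (by congr 1)
      intro k _
      have e1 : ((1 + k : ℕ) : ℝ) = (k:ℝ) + 1 := by push_cast; ring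
      have e2 : A G (k+1) = ((k:ℝ)+2)/((G:ℝ)+1) := by
        simp only [hAdef]; push_cast; ring_nf
      have e3 : A G k = ((k:ℝ)+1)/((G:ℝ)+1) := by simp only [hAdef]
      rw [e1, e2, e3,
        show ((k:ℝ)+1+1)/((G:ℝ)+1) = ((k:ℝ)+2)/((G:ℝ)+1) from by ring]
    rw [hS1, hS2, hB, hMaindef]
    have hsum : (∑ k ∈ Finset.range (G-1), ψ (A G (k+1)) * (φ (A G (k+1)) - φ (A G k)))
        - (∑ k ∈ Finset.range (G-1), ψ (A G k) * (φ (A G (k+1)) - φ (A G k)))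
        = ∑ k ∈ Finset.range (G-1),
            (ψ (A G (k+1)) - ψ (A G k)) * (φ (A G (k+1)) - φ (A G k)) := by
      rw [← Finset.sum_sub_distrib]
      apply Finset.sum_congr rfl
      intro k _
      ring
    rw [show ∀ x y z w : ℝ, ((G:ℝ)+1) * (x - y + z + w)
        = ((G:ℝ)+1) * (x - y) + ((G:ℝ)+1) * (z + w) from fun x y z w => by ring, hsum]
  have hlim : Tendsto (fun G : ℕ => ((G:ℝ)+1) * Main G + B G) atTop (nhds J) := by
    have h1 : Tendsto (fun G : ℕ => (((G:ℝ)+1) * Main G - I G) + I G + B G) atTop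
        (nhds (0 + J + 0)) := (hP2.add hP3).add hP4
    rw [zero_add, add_zero] at h1
    apply h1.congr
    intro G
    ring
  apply hlim.congr'
  filter_upwards [eventually_ge_atTop 2] with G hG
  exact (hP1 G hG).symm
end

section
/- Let X be a chi-squared random variable with k degrees of freedom, where k > 2, let ε > 0, set δ = ε/(k−2) and a = ε/(e^δ − 1), and let D_k denote the chi-squared cumulative distribution function with k degrees of freedom. Then: (i) sup_{c∈ℝ} P[c ≤ X ≤ c+ε] ≤ D_k(a+ε) − D_k(a) (note a+ε = a·e^δ = ε·e^δ/(e^δ−1)); and (ii) D_k(a+ε) − D_k(a) ≤ ε^{k/2} e^{ε/2} / ((e^δ − 1)^{k/2−1} · 2^{k/2} · Γ(k/2)) · exp(−ε/(2(e^δ − 1))). -/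
open MeasureTheory Set

/-- Density of the chi-squared distribution with `k` degrees of freedom. -/
noncomputable def chiSqPDF (k : ℝ) (t : ℝ) : ℝ :=
  if 0 < t then t ^ (k / 2 - 1) * Real.exp (-t / 2) / (2 ^ (k / 2) * Real.Gamma (k / 2)) else 0

/-- Cumulative distribution function `D_k` of the chi-squared distribution with `k` degrees of
freedom. -/
noncomputable def chiSqCDF (k : ℝ) (x : ℝ) : ℝ := ∫ t in (0 : ℝ)..x, chiSqPDF k t


lemma C_pos {k : ℝ} (hk : 0 < k) : 0 < (2:ℝ) ^ (k/2) * Real.Gamma (k/2) :=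
  mul_pos (Real.rpow_pos_of_pos two_pos _) (Real.Gamma_pos_of_pos (by linarith))

lemma chiSqPDF_nonneg {k : ℝ} (hk : 0 < k) (t : ℝ) : 0 ≤ chiSqPDF k t := by
  unfold chiSqPDF
  split
  · exact div_nonneg (mul_nonneg (Real.rpow_nonneg (by linarith) _) (Real.exp_nonneg _))
      (C_pos hk).le
  · exact le_refl 0

lemma chiSqPDF_eq {k : ℝ} {t : ℝ} (ht : 0 < t) :
    chiSqPDF k t = Real.exp ((k/2 - 1) * Real.log t - t/2) / (2^(k/2) * Real.Gamma (k/2)) := by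
  unfold chiSqPDF
  rw [if_pos ht, Real.rpow_def_of_pos ht, ← Real.exp_add]
  congr 2
  ring

lemma chiSqPDF_measurable (k : ℝ) : Measurable (chiSqPDF k) := by
  unfold chiSqPDF
  exact Measurable.ite measurableSet_Ioi (by fun_prop) measurable_const

lemma chiSqPDF_mono {k : ℝ} (hk : 2 < k) {s t : ℝ} (hs : 0 < s) (hst : s ≤ t)
    (ht : t ≤ k - 2) : chiSqPDF k s ≤ chiSqPDF k t := by
  have ht0 : 0 < t := lt_of_lt_of_le hs hst
  rw [chiSqPDF_eq hs, chiSqPDF_eq ht0]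
  have hC := C_pos (k := k) (by linarith)
  have hL : 0 ≤ Real.log t - Real.log s := by
    have := Real.log_le_log hs hst
    linarith
  have hlog : t - s ≤ t * (Real.log t - Real.log s) := by
    have h := Real.log_le_sub_one_of_pos (div_pos hs ht0)
    rw [Real.log_div hs.ne' ht0.ne'] at h
    have h2 : t * (s / t) = s := by field_simp
    nlinarith [mul_le_mul_of_nonneg_left h ht0.le]
  have key : (k/2 - 1) * Real.log s - s/2 ≤ (k/2 - 1) * Real.log t - t/2 := by
    nlinarith [hlog, hL, mul_le_mul_of_nonneg_right (show t/2 ≤ k/2 - 1 by linarith) hL]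
  gcongr

lemma chiSqPDF_anti {k : ℝ} (hk : 2 < k) {s t : ℝ} (hs : k - 2 ≤ s) (hst : s ≤ t) :
    chiSqPDF k t ≤ chiSqPDF k s := by
  have hs0 : 0 < s := lt_of_lt_of_le (by linarith) hs
  have ht0 : 0 < t := lt_of_lt_of_le hs0 hst
  rw [chiSqPDF_eq hs0, chiSqPDF_eq ht0]
  have hC := C_pos (k := k) (by linarith)
  have hL : 0 ≤ Real.log t - Real.log s := by
    have := Real.log_le_log hs0 hst
    linarith
  have hlog : s * (Real.log t - Real.log s) ≤ t - s := by
    have h := Real.log_le_sub_one_of_pos (div_pos ht0 hs0)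
    rw [Real.log_div ht0.ne' hs0.ne'] at h
    have h2 : s * (t / s) = t := by field_simp
    nlinarith [mul_le_mul_of_nonneg_left h hs0.le]
  have key : (k/2 - 1) * Real.log t - t/2 ≤ (k/2 - 1) * Real.log s - s/2 := by
    nlinarith [hlog, hL, mul_le_mul_of_nonneg_right (show k/2 - 1 ≤ s/2 by linarith) hL]
  gcongr

section Keys
variable {k ε : ℝ} (hk : 2 < k) (hε : 0 < ε)
include hk hε

lemma E_pos : 0 < Real.exp (ε / (k - 2)) - 1 := by
  have h1 : (0:ℝ) < ε / (k - 2) := div_pos hε (by linarith)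
  have := Real.exp_lt_exp.mpr h1
  rw [Real.exp_zero] at this
  linarith

lemma a_pos : 0 < ε / (Real.exp (ε / (k - 2)) - 1) := div_pos hε (E_pos hk hε)

lemma a_le : ε / (Real.exp (ε / (k - 2)) - 1) ≤ k - 2 := by
  have hE := E_pos hk hε
  have hδ : ε / (k - 2) + 1 ≤ Real.exp (ε / (k - 2)) := Real.add_one_le_exp _
  rw [div_le_iff₀ hE]
  have hk2 : (0:ℝ) < k - 2 := by linarith
  have : (k - 2) * (ε / (k - 2)) = ε := by field_simp
  nlinarith
 
lemma a_add_le : k - 2 ≤ ε / (Real.exp (ε / (k - 2)) - 1) + ε := by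
  have hE := E_pos hk hε
  have hk2 : (0:ℝ) < k - 2 := by linarith
  have hδ : -(ε / (k - 2)) + 1 ≤ Real.exp (-(ε / (k - 2))) := Real.add_one_le_exp _
  rw [Real.exp_neg] at hδ
  have hexp : 0 < Real.exp (ε / (k - 2)) := Real.exp_pos _
  have hδ' : 1 - ε / (k - 2) ≤ (Real.exp (ε / (k - 2)))⁻¹ := by linarith
  have h1 := mul_le_mul_of_nonneg_right hδ' hexp.le
  rw [inv_mul_cancel₀ hexp.ne'] at h1
  have hde : (ε / (k - 2)) * (k - 2) = ε := by field_simp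
  rw [← sub_le_iff_le_add, le_div_iff₀ hE]
  nlinarith [mul_le_mul_of_nonneg_right h1 hk2.le, hde]

lemma a_exp : ε / (Real.exp (ε / (k - 2)) - 1) + ε
    = ε / (Real.exp (ε / (k - 2)) - 1) * Real.exp (ε / (k - 2)) := by
  have hE := E_pos hk hε
  field_simp
  ring

lemma pdf_endpoint_eq :
    chiSqPDF k (ε / (Real.exp (ε / (k - 2)) - 1) + ε)
      = chiSqPDF k (ε / (Real.exp (ε / (k - 2)) - 1)) := by
  have ha := a_pos hk hε
  have hE := E_pos hk hε
  set a := ε / (Real.exp (ε / (k - 2)) - 1) with hadef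
  have haε : 0 < a + ε := by linarith
  rw [chiSqPDF_eq ha, chiSqPDF_eq haε]
  congr 2
  rw [a_exp hk hε, Real.log_mul ha.ne' (Real.exp_pos _).ne', Real.log_exp]
  have hk2 : (k:ℝ) - 2 ≠ 0 := by linarith
  have h1 : (k/2 - 1) * (ε / (k - 2)) = ε / 2 := by field_simp
  have h2 : a + ε = a * Real.exp (ε / (k - 2)) := a_exp hk hε
  nlinarith [h1, h2]

lemma P1 {t : ℝ} (ht : t ≤ ε / (Real.exp (ε / (k - 2)) - 1)) :
    chiSqPDF k t ≤ chiSqPDF k (ε / (Real.exp (ε / (k - 2)) - 1)) := by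
  rcases le_or_gt t 0 with h | h
  · have : chiSqPDF k t = 0 := by unfold chiSqPDF; rw [if_neg (by linarith)]
    rw [this]; exact chiSqPDF_nonneg (by linarith) _
  · exact chiSqPDF_mono hk h ht (a_le hk hε)

lemma P2 {t : ℝ} (ht1 : ε / (Real.exp (ε / (k - 2)) - 1) ≤ t)
    (ht2 : t ≤ ε / (Real.exp (ε / (k - 2)) - 1) + ε) :
    chiSqPDF k (ε / (Real.exp (ε / (k - 2)) - 1)) ≤ chiSqPDF k t := by
  have ha := a_pos hk hε
  rcases le_or_gt t (k - 2) with h | h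
  · exact chiSqPDF_mono hk ha ht1 h
  · rw [← pdf_endpoint_eq hk hε]
    exact chiSqPDF_anti hk h.le ht2

lemma P3 {t : ℝ} (ht : ε / (Real.exp (ε / (k - 2)) - 1) + ε ≤ t) :
    chiSqPDF k t ≤ chiSqPDF k (ε / (Real.exp (ε / (k - 2)) - 1)) := by
  rw [← pdf_endpoint_eq hk hε]
  exact chiSqPDF_anti hk (a_add_le hk hε) ht

end Keys

lemma chiSqPDF_le_mode {k : ℝ} (hk : 2 < k) (t : ℝ) :
    chiSqPDF k t ≤ chiSqPDF k (k - 2) := by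
  rcases le_or_gt t 0 with h | h
  · have : chiSqPDF k t = 0 := by unfold chiSqPDF; rw [if_neg (by linarith)]
    rw [this]; exact chiSqPDF_nonneg (by linarith) _
  · rcases le_or_gt t (k - 2) with h2 | h2
    · exact chiSqPDF_mono hk h h2 le_rfl
    · exact chiSqPDF_anti hk le_rfl h2.le -- check

lemma chiSqPDF_intervalIntegrable {k : ℝ} (hk : 2 < k) (u v : ℝ) :
    IntervalIntegrable (chiSqPDF k) volume u v := by
  rw [intervalIntegrable_iff]
  apply MeasureTheory.Measure.integrableOn_of_bounded
  · rw [Set.uIoc]; exact (measure_Ioc_lt_top).ne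
  · exact (chiSqPDF_measurable k).aestronglyMeasurable
  · filter_upwards with t
    rw [Real.norm_eq_abs, abs_of_nonneg (chiSqPDF_nonneg (by linarith) t)]
    exact chiSqPDF_le_mode hk t


lemma cdf_sub {k : ℝ} (hk : 2 < k) (u v : ℝ) :
    chiSqCDF k v - chiSqCDF k u = ∫ t in u..v, chiSqPDF k t := by
  unfold chiSqCDF
  rw [← intervalIntegral.integral_add_adjacent_intervals
    (chiSqPDF_intervalIntegrable hk 0 u) (chiSqPDF_intervalIntegrable hk u v)]
  ring

lemma prob_eq {Ω : Type*} [MeasurableSpace Ω] (μ : Measure Ω)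
    {k : ℝ} (hk : 2 < k) {ε : ℝ} (hε : 0 < ε) (X : Ω → ℝ) (hX : Measurable X)
    (hlaw : Measure.map X μ =
      MeasureTheory.volume.withDensity (fun t => ENNReal.ofReal (chiSqPDF k t)))
    (c : ℝ) :
    (μ {ω | c ≤ X ω ∧ X ω ≤ c + ε}).toReal = ∫ t in c..(c + ε), chiSqPDF k t := by
  have hset : {ω | c ≤ X ω ∧ X ω ≤ c + ε} = X ⁻¹' Set.Icc c (c + ε) := rfl
  rw [hset, ← Measure.map_apply hX measurableSet_Icc, hlaw,
    withDensity_apply _ measurableSet_Icc]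
  have hnn : 0 ≤ᵐ[volume.restrict (Set.Icc c (c + ε))] chiSqPDF k :=
    Filter.Eventually.of_forall (chiSqPDF_nonneg (by linarith))
  rw [← MeasureTheory.integral_eq_lintegral_of_nonneg_ae hnn
    ((chiSqPDF_measurable k).aestronglyMeasurable)]
  rw [MeasureTheory.integral_Icc_eq_integral_Ioc,
    ← intervalIntegral.integral_of_le (by linarith : c ≤ c + ε)]

lemma shift_bound {k ε : ℝ} (hk : 2 < k) (hε : 0 < ε) (c : ℝ) :
    ∫ t in c..(c + ε), chiSqPDF k t
      ≤ ∫ t in (ε / (Real.exp (ε / (k - 2)) - 1))..(ε / (Real.exp (ε / (k - 2)) - 1) + ε),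
          chiSqPDF k t := by
  set a := ε / (Real.exp (ε / (k - 2)) - 1) with hadef
  have ha := a_pos hk hε
  set M := chiSqPDF k a with hM
  have hII := fun u v => chiSqPDF_intervalIntegrable (k := k) hk u v
  have hconst : ∀ u v : ℝ, (∫ _ in u..v, M) = (v - u) * M := by
    intro u v; rw [intervalIntegral.integral_const, smul_eq_mul]
  rcases le_total c a with hca | hca
  · rcases le_total (c + ε) a with hce | hce
    · -- disjoint: ∫_c^{c+ε} ≤ ε M ≤ ∫_a^{a+ε}
      calc ∫ t in c..(c + ε), chiSqPDF k t ≤ ∫ _ in c..(c + ε), M := by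
            apply intervalIntegral.integral_mono_on (by linarith) (hII _ _)
              (intervalIntegrable_const)
            intro t ht
            exact P1 hk hε (le_trans ht.2 hce)
        _ = ε * M := by rw [hconst]; ring_nf
        _ = ∫ _ in a..(a + ε), M := by rw [hconst]; ring_nf
        _ ≤ ∫ t in a..(a + ε), chiSqPDF k t := by
            apply intervalIntegral.integral_mono_on (by linarith)
              (intervalIntegrable_const) (hII _ _)
            intro t ht
            exact P2 hk hε ht.1 ht.2
    · -- overlap: reduce to ∫_c^a ≤ ∫_{c+ε}^{a+ε}
      have e1 : (∫ t in c..(c + ε), chiSqPDF k t)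
          = (∫ t in c..a, chiSqPDF k t) + ∫ t in a..(c + ε), chiSqPDF k t :=
        (intervalIntegral.integral_add_adjacent_intervals (hII _ _) (hII _ _)).symm
      have e2 : (∫ t in a..(a + ε), chiSqPDF k t)
          = (∫ t in a..(c + ε), chiSqPDF k t) + ∫ t in (c + ε)..(a + ε), chiSqPDF k t :=
        (intervalIntegral.integral_add_adjacent_intervals (hII _ _) (hII _ _)).symm
      have h1 : (∫ t in c..a, chiSqPDF k t) ≤ (a - c) * M := by
        rw [← hconst c a]
        apply intervalIntegral.integral_mono_on hca (hII _ _) intervalIntegrable_const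
        intro t ht
        exact P1 hk hε ht.2
      have h2 : (a - c) * M ≤ ∫ t in (c + ε)..(a + ε), chiSqPDF k t := by
        have : (a - c) * M = (a + ε - (c + ε)) * M := by ring
        rw [this, ← hconst (c + ε) (a + ε)]
        apply intervalIntegral.integral_mono_on (by linarith)
          intervalIntegrable_const (hII _ _)
        intro t ht
        exact P2 hk hε (le_trans hce ht.1) ht.2
      linarith
  · rcases le_total (a + ε) c with hce | hce
    · calc ∫ t in c..(c + ε), chiSqPDF k t ≤ ∫ _ in c..(c + ε), M := by
            apply intervalIntegral.integral_mono_on (by linarith) (hII _ _)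
              (intervalIntegrable_const)
            intro t ht
            exact P3 hk hε (le_trans hce ht.1)
        _ = ε * M := by rw [hconst]; ring_nf
        _ = ∫ _ in a..(a + ε), M := by rw [hconst]; ring_nf
        _ ≤ ∫ t in a..(a + ε), chiSqPDF k t := by
            apply intervalIntegral.integral_mono_on (by linarith)
              (intervalIntegrable_const) (hII _ _)
            intro t ht
            exact P2 hk hε ht.1 ht.2
    · have e1 : (∫ t in c..(c + ε), chiSqPDF k t)
          = (∫ t in c..(a + ε), chiSqPDF k t) + ∫ t in (a + ε)..(c + ε), chiSqPDF k t :=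
        (intervalIntegral.integral_add_adjacent_intervals (hII _ _) (hII _ _)).symm
      have e2 : (∫ t in a..(a + ε), chiSqPDF k t)
          = (∫ t in a..c, chiSqPDF k t) + ∫ t in c..(a + ε), chiSqPDF k t :=
        (intervalIntegral.integral_add_adjacent_intervals (hII _ _) (hII _ _)).symm
      have h1 : (∫ t in (a + ε)..(c + ε), chiSqPDF k t) ≤ (c - a) * M := by
        have : (c - a) * M = (c + ε - (a + ε)) * M := by ring
        rw [this, ← hconst (a + ε) (c + ε)]
        apply intervalIntegral.integral_mono_on (by linarith) (hII _ _)
          intervalIntegrable_const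
        intro t ht
        exact P3 hk hε ht.1
      have h2 : (c - a) * M ≤ ∫ t in a..c, chiSqPDF k t := by
        rw [← hconst a c]
        apply intervalIntegral.integral_mono_on hca intervalIntegrable_const (hII _ _)
        intro t ht
        exact P2 hk hε ht.1 (le_trans ht.2 hce)
      linarith

lemma part_two {k ε : ℝ} (hk : 2 < k) (hε : 0 < ε) :
    (∫ t in (ε / (Real.exp (ε / (k - 2)) - 1))..(ε / (Real.exp (ε / (k - 2)) - 1) + ε),
        chiSqPDF k t)
      ≤ ε ^ (k / 2) * Real.exp (ε / 2)
          / ((Real.exp (ε / (k - 2)) - 1) ^ (k / 2 - 1) * 2 ^ (k / 2) * Real.Gamma (k / 2))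
        * Real.exp (-ε / (2 * (Real.exp (ε / (k - 2)) - 1))) := by
  have hE := E_pos hk hε
  set E := Real.exp (ε / (k - 2)) - 1 with hEdef
  set a := ε / E with hadef
  have ha : 0 < a := div_pos hε hE
  have hC := C_pos (k := k) (by linarith : (0:ℝ) < k)
  have hp : (0:ℝ) < k/2 - 1 := by linarith
  have hk2 : (k - 2 : ℝ) ≠ 0 := by linarith
  set C := (2:ℝ) ^ (k/2) * Real.Gamma (k/2) with hCdef
  set B := (a + ε) ^ (k/2 - 1) * Real.exp (-a / 2) / C with hBdef
  have hpt : ∀ t ∈ Set.Icc a (a + ε), chiSqPDF k t ≤ B := by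
    intro t ht
    have ht0 : 0 < t := lt_of_lt_of_le ha ht.1
    unfold chiSqPDF
    rw [if_pos ht0, hBdef]
    gcongr
    · exact ht.2
    · exact ht.1
  have hstep : (∫ t in a..(a + ε), chiSqPDF k t) ≤ ε * B := by
    have h : ε * B = (a + ε - a) * B := by ring
    rw [h, ← smul_eq_mul, ← intervalIntegral.integral_const]
    exact intervalIntegral.integral_mono_on (by linarith)
      (chiSqPDF_intervalIntegrable hk _ _) intervalIntegrable_const hpt
  refine hstep.trans (le_of_eq ?_)
  have h1 : a + ε = a * Real.exp (ε / (k - 2)) := a_exp hk hε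
  have h2 : (a + ε) ^ (k/2 - 1) = a ^ (k/2 - 1) * Real.exp (ε / 2) := by
    rw [h1, Real.mul_rpow ha.le (Real.exp_pos _).le,
      Real.rpow_def_of_pos (Real.exp_pos _), Real.log_exp]
    congr 2
    field_simp
  have h3 : a ^ (k/2 - 1) = ε ^ (k/2 - 1) / E ^ (k/2 - 1) := by
    rw [hadef, Real.div_rpow hε.le hE.le]
  have h4 : ε ^ (k/2 : ℝ) = ε * ε ^ (k/2 - 1) := by
    conv_lhs => rw [show (k/2 : ℝ) = 1 + (k/2 - 1) by ring]
    rw [Real.rpow_add hε, Real.rpow_one]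
  have h5 : -a / 2 = -ε / (2 * E) := by
    rw [hadef, neg_div, div_div, mul_comm, neg_div]
  have hEp : (0:ℝ) < E ^ (k/2 - 1) := Real.rpow_pos_of_pos hE _
  rw [hBdef, h2, h3, h5, h4, hCdef]
  field_simp

/-- Let `X` be chi-squared with `k > 2` degrees of freedom, `ε > 0`,
`δ = ε/(k−2)`, `a = ε/(e^δ − 1)`. Then (i) `sup_c P[c ≤ X ≤ c+ε] ≤ D_k(a+ε) − D_k(a)`, and
(ii) `D_k(a+ε) − D_k(a) ≤ ε^{k/2} e^{ε/2} / ((e^δ−1)^{k/2−1}·2^{k/2}·Γ(k/2)) · exp(−ε/(2(e^δ−1)))`. -/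
theorem chiSq_interval_probability_bound
    {Ω : Type*} [MeasurableSpace Ω] (μ : Measure Ω) [IsProbabilityMeasure μ]
    (k : ℝ) (hk : 2 < k) (ε : ℝ) (hε : 0 < ε)
    (X : Ω → ℝ) (hX : Measurable X)
    (hlaw : Measure.map X μ =
      MeasureTheory.volume.withDensity (fun t => ENNReal.ofReal (chiSqPDF k t))) :
    (⨆ c : ℝ, (μ {ω | c ≤ X ω ∧ X ω ≤ c + ε}).toReal)
        ≤ chiSqCDF k (ε / (Real.exp (ε / (k - 2)) - 1) + ε)
            - chiSqCDF k (ε / (Real.exp (ε / (k - 2)) - 1))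
    ∧ chiSqCDF k (ε / (Real.exp (ε / (k - 2)) - 1) + ε)
          - chiSqCDF k (ε / (Real.exp (ε / (k - 2)) - 1))
        ≤ ε ^ (k / 2) * Real.exp (ε / 2)
              / ((Real.exp (ε / (k - 2)) - 1) ^ (k / 2 - 1) * 2 ^ (k / 2) * Real.Gamma (k / 2))
            * Real.exp (-ε / (2 * (Real.exp (ε / (k - 2)) - 1))) := by
  have hacdf := cdf_sub hk (ε / (Real.exp (ε / (k - 2)) - 1))
    (ε / (Real.exp (ε / (k - 2)) - 1) + ε)
  constructor
  · rw [hacdf]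
    apply ciSup_le
    intro c
    rw [prob_eq μ hk hε X hX hlaw c]
    exact shift_bound hk hε c
  · rw [hacdf]
    exact part_two hk hε
end
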